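/- arXiv:1003.3183 — 5 statements merged into one kernel-verified Lean document; each statement's English description precedes it below -/
import Mathlib

section
/- With c_{ij} = p_i q_j - p_j q_i for complex numbers p₁,...,p₄, q₁,...,q₄, one has the inequality 2|Re(c₃₄ · conj(c₁₂))| ≤ |c₂₃|² + |c₁₄|² + |c₁₃|² + |c₂₄|². -/
/-!
The Plücker relation `c₃₄ c₁₂ = c₁₃ c₂₄ - c₁₄ c₂₃` bounds `|c₃₄ c₁₂|` by `|c₁₃| |c₂₄| + |c₁₄| |c₂₃|`,
and `2xy ≤ x² + y²` turns each product into a sum of squares.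
-/

theorem plucker_relation {R : Type*} [CommRing R] (p₁ p₂ p₃ p₄ q₁ q₂ q₃ q₄ : R) :
    (p₃ * q₄ - p₄ * q₃) * (p₁ * q₂ - p₂ * q₁) =
      (p₁ * q₃ - p₃ * q₁) * (p₂ * q₄ - p₄ * q₂) - (p₁ * q₄ - p₄ * q₁) * (p₂ * q₃ - p₃ * q₂) := by
  ring

theorem Complex.abs_re_mul_conj_le_norm_mul (z w : ℂ) : |(z * starRingEnd ℂ w).re| ≤ ‖z * w‖ :=
  calc |(z * starRingEnd ℂ w).re| ≤ ‖z * starRingEnd ℂ w‖ := abs_re_le_norm _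
    _ = ‖z * w‖ := by rw [norm_mul, norm_mul, norm_conj]

theorem two_mul_norm_mul_sub_mul_le {R : Type*} [NonUnitalSeminormedRing R] (a b c d : R) :
    2 * ‖a * b - c * d‖ ≤ ‖a‖ ^ 2 + ‖b‖ ^ 2 + ‖c‖ ^ 2 + ‖d‖ ^ 2 := by
  have hab := two_mul_le_add_sq ‖a‖ ‖b‖
  have hcd := two_mul_le_add_sq ‖c‖ ‖d‖
  calc 2 * ‖a * b - c * d‖ ≤ 2 * (‖a‖ * ‖b‖ + ‖c‖ * ‖d‖) := by
        gcongr
        exact (norm_sub_le _ _).trans (add_le_add (norm_mul_le _ _) (norm_mul_le _ _))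
    _ ≤ ‖a‖ ^ 2 + ‖b‖ ^ 2 + ‖c‖ ^ 2 + ‖d‖ ^ 2 := by linarith

theorem re_product_bound (p₁ p₂ p₃ p₄ q₁ q₂ q₃ q₄ : ℂ) :
    2 * |((p₃ * q₄ - p₄ * q₃) * (starRingEnd ℂ) (p₁ * q₂ - p₂ * q₁)).re| ≤
      ‖p₂ * q₃ - p₃ * q₂‖ ^ 2 + ‖p₁ * q₄ - p₄ * q₁‖ ^ 2 +
      ‖p₁ * q₃ - p₃ * q₁‖ ^ 2 + ‖p₂ * q₄ - p₄ * q₂‖ ^ 2 := by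
  calc 2 * |((p₃ * q₄ - p₄ * q₃) * (starRingEnd ℂ) (p₁ * q₂ - p₂ * q₁)).re|
      ≤ 2 * ‖(p₃ * q₄ - p₄ * q₃) * (p₁ * q₂ - p₂ * q₁)‖ := by
        gcongr; exact Complex.abs_re_mul_conj_le_norm_mul _ _
    _ ≤ ‖p₁ * q₃ - p₃ * q₁‖ ^ 2 + ‖p₂ * q₄ - p₄ * q₂‖ ^ 2 +
          ‖p₁ * q₄ - p₄ * q₁‖ ^ 2 + ‖p₂ * q₃ - p₃ * q₂‖ ^ 2 := by
        rw [plucker_relation]; exact two_mul_norm_mul_sub_mul_le _ _ _ _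
    _ = _ := by ring
end

section
/- With c_{ij} = p_i q_j - p_j q_i for complex numbers p₁,...,p₄, q₁,...,q₄, and for any real t with |t| ≤ 1, one has 4(|c₂₄|² + |c₂₃|² + |c₁₄|² + |c₁₃|²) + t·(−2|c₂₄|² − 2|c₁₃|² + 4Re(c₃₄·conj(c₁₂)) − 4Re(c₂₃·conj(c₁₄))) ≥ 0. -/
/-!
The 2×2 minors `c_{ij}` satisfy the Plücker relation `c₁₂ c₃₄ = c₁₃ c₂₄ - c₁₄ c₂₃`, so
`|c₁₂| |c₃₄| ≤ |c₁₃| |c₂₄| + |c₁₄| |c₂₃|`. Together with AM-GM this bounds the coefficient of `t`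
in absolute value by the constant term `4 (|c₂₄|² + |c₂₃|² + |c₁₄|² + |c₁₃|²)`, and `|t| ≤ 1` does
the rest.
-/

open ComplexConjugate

theorem pluecker_relation {R : Type*} [CommRing R] (p₁ p₂ p₃ p₄ q₁ q₂ q₃ q₄ : R) :
    (p₁ * q₂ - p₂ * q₁) * (p₃ * q₄ - p₄ * q₃) =
      (p₁ * q₃ - p₃ * q₁) * (p₂ * q₄ - p₄ * q₂) - (p₁ * q₄ - p₄ * q₁) * (p₂ * q₃ - p₃ * q₂) := by
  ring

theorem Complex.abs_re_mul_conj_le (z w : ℂ) : |(z * conj w).re| ≤ ‖z‖ * ‖w‖ := by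
  simpa only [norm_mul, Complex.norm_conj] using Complex.abs_re_le_norm (z * conj w)

theorem add_mul_nonneg_of_abs_le {s t x : ℝ} (ht : |t| ≤ 1) (hx : |x| ≤ s) : 0 ≤ s + t * x := by
  have : |t * x| ≤ s := by
    rw [abs_mul]
    nlinarith [abs_nonneg t, abs_nonneg x]
  linarith [neg_abs_le (t * x)]

theorem norm_mul_norm_le_of_pluecker {c₁₂ c₁₃ c₁₄ c₂₃ c₂₄ c₃₄ : ℂ}
    (h : c₁₂ * c₃₄ = c₁₃ * c₂₄ - c₁₄ * c₂₃) :
    ‖c₃₄‖ * ‖c₁₂‖ ≤ ‖c₁₃‖ * ‖c₂₄‖ + ‖c₁₄‖ * ‖c₂₃‖ :=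
  calc ‖c₃₄‖ * ‖c₁₂‖ = ‖c₁₃ * c₂₄ - c₁₄ * c₂₃‖ := by rw [← h, norm_mul, mul_comm]
    _ ≤ ‖c₁₃‖ * ‖c₂₄‖ + ‖c₁₄‖ * ‖c₂₃‖ := by
      simpa only [norm_mul] using norm_sub_le (c₁₃ * c₂₄) (c₁₄ * c₂₃)

theorem abs_linear_term_le_of_pluecker {c₁₂ c₁₃ c₁₄ c₂₃ c₂₄ c₃₄ : ℂ}
    (h : c₁₂ * c₃₄ = c₁₃ * c₂₄ - c₁₄ * c₂₃) :
    |-2 * ‖c₂₄‖ ^ 2 - 2 * ‖c₁₃‖ ^ 2 + 4 * (c₃₄ * conj c₁₂).re - 4 * (c₂₃ * conj c₁₄).re| ≤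
      4 * (‖c₂₄‖ ^ 2 + ‖c₂₃‖ ^ 2 + ‖c₁₄‖ ^ 2 + ‖c₁₃‖ ^ 2) := by
  have h₃₄₁₂ := abs_le.mp <| (Complex.abs_re_mul_conj_le c₃₄ c₁₂).trans
    (norm_mul_norm_le_of_pluecker h)
  have h₂₃₁₄ := abs_le.mp (Complex.abs_re_mul_conj_le c₂₃ c₁₄)
  have h₁₃₂₄ := two_mul_le_add_sq ‖c₁₃‖ ‖c₂₄‖
  have h₁₄₂₃ := two_mul_le_add_sq ‖c₁₄‖ ‖c₂₃‖
  rw [abs_le]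
  constructor <;> linarith [sq_nonneg ‖c₂₄‖, sq_nonneg ‖c₁₃‖]

theorem mu_t_weakly_positive (p₁ p₂ p₃ p₄ q₁ q₂ q₃ q₄ : ℂ) (t : ℝ) (ht : |t| ≤ 1) :
    4 * (‖p₂ * q₄ - p₄ * q₂‖ ^ 2 + ‖p₂ * q₃ - p₃ * q₂‖ ^ 2 +
          ‖p₁ * q₄ - p₄ * q₁‖ ^ 2 + ‖p₁ * q₃ - p₃ * q₁‖ ^ 2) +
      t * (-2 * ‖p₂ * q₄ - p₄ * q₂‖ ^ 2 - 2 * ‖p₁ * q₃ - p₃ * q₁‖ ^ 2 +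
        4 * ((p₃ * q₄ - p₄ * q₃) * (starRingEnd ℂ) (p₁ * q₂ - p₂ * q₁)).re -
        4 * ((p₂ * q₃ - p₃ * q₂) * (starRingEnd ℂ) (p₁ * q₄ - p₄ * q₁)).re) ≥ 0 :=
  add_mul_nonneg_of_abs_le ht <|
    abs_linear_term_le_of_pluecker (pluecker_relation p₁ p₂ p₃ p₄ q₁ q₂ q₃ q₄)
end

section
/- Let H be the real symmetric 4×4 matrix [[2a₁, a₄, −a₄, 2a₆], [a₄, a₂, −2a₆, a₅], [−a₄, −2a₆, a₂, −a₅], [2a₆, a₅, −a₅, 2a₃]]. Then H is positive semidefinite if and only if a₂ − 2a₆ ≥ 0 and the 3×3 symmetric matrix [[a₁, a₄, a₆], [a₄, a₂ + 2a₆, a₅], [a₆, a₅, a₃]] is positive semidefinite. -/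
/-!
The substitution `(y, z) = (s + t, t - s)` diagonalises the quadratic form of the `4 × 4` matrix
into twice the form of the `3 × 3` matrix in `(x, s, w)` plus `2 (a₂ - 2 a₆) t²`. As `s` and `t`
range independently over `ℝ`, the sum is nonnegative exactly when both summands are.
-/

open Matrix

section

variable (a₁ a₂ a₃ a₄ a₅ a₆ : ℝ)

def matrixH : Matrix (Fin 4) (Fin 4) ℝ :=
  !![2*a₁, a₄, -a₄, 2*a₆;
     a₄, a₂, -2*a₆, a₅;
     -a₄, -2*a₆, a₂, -a₅;
     2*a₆, a₅, -a₅, 2*a₃]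

def matrixK : Matrix (Fin 3) (Fin 3) ℝ :=
  !![a₁, a₄, a₆;
     a₄, a₂ + 2*a₆, a₅;
     a₆, a₅, a₃]

theorem isHermitian_matrixH : (matrixH a₁ a₂ a₃ a₄ a₅ a₆).IsHermitian := by
  ext i j
  fin_cases i <;> fin_cases j <;> simp [matrixH]

theorem isHermitian_matrixK : (matrixK a₁ a₂ a₃ a₄ a₅ a₆).IsHermitian := by
  ext i j
  fin_cases i <;> fin_cases j <;> simp [matrixK]

theorem dotProduct_matrixH_mulVec (x s t w : ℝ) :
    ![x, s + t, t - s, w] ⬝ᵥ matrixH a₁ a₂ a₃ a₄ a₅ a₆ *ᵥ ![x, s + t, t - s, w] =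
      2 * (![x, s, w] ⬝ᵥ matrixK a₁ a₂ a₃ a₄ a₅ a₆ *ᵥ ![x, s, w]) + 2 * (a₂ - 2*a₆) * t ^ 2 := by
  simp [matrixH, matrixK, dotProduct, mulVec, Fin.sum_univ_four, Fin.sum_univ_three]
  ring

theorem posSemidef_matrixH_iff :
    (matrixH a₁ a₂ a₃ a₄ a₅ a₆).PosSemidef ↔
      0 ≤ a₂ - 2*a₆ ∧ (matrixK a₁ a₂ a₃ a₄ a₅ a₆).PosSemidef := by
  simp only [posSemidef_iff_dotProduct_mulVec, star_trivial]
  constructor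
  · rintro ⟨-, hH⟩
    refine ⟨?_, isHermitian_matrixK .., fun u => ?_⟩
    · have h := hH ![0, 0 + 1, 1 - 0, 0]
      rw [dotProduct_matrixH_mulVec] at h
      simp [dotProduct, Fin.sum_univ_three] at h
      linarith
    · have h := hH ![u 0, u 1 + 0, 0 - u 1, u 2]
      rw [dotProduct_matrixH_mulVec] at h
      have hu : ![u 0, u 1, u 2] = u := by
        ext i; fin_cases i <;> rfl
      rw [hu] at h
      linarith
  · rintro ⟨hc, -, hK⟩
    refine ⟨isHermitian_matrixH .., fun v => ?_⟩
    set s := (v 1 - v 2) / 2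
    set t := (v 1 + v 2) / 2
    have hv : v = ![v 0, s + t, t - s, v 3] := by
      ext i; fin_cases i <;> simp [s, t] <;> ring
    rw [hv, dotProduct_matrixH_mulVec]
    have := hK ![v 0, s, v 3]
    positivity

end

theorem posSemidef_4x4_iff (a₁ a₂ a₃ a₄ a₅ a₆ : ℝ) :
    (!![2*a₁, a₄, -a₄, 2*a₆;
        a₄, a₂, -2*a₆, a₅;
        -a₄, -2*a₆, a₂, -a₅;
        2*a₆, a₅, -a₅, 2*a₃] : Matrix (Fin 4) (Fin 4) ℝ).PosSemidef ↔
      (a₂ - 2*a₆ ≥ 0 ∧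
        (!![a₁, a₄, a₆;
            a₄, a₂ + 2*a₆, a₅;
            a₆, a₅, a₃] : Matrix (Fin 3) (Fin 3) ℝ).PosSemidef) :=
  posSemidef_matrixH_iff a₁ a₂ a₃ a₄ a₅ a₆
end

section
/- Let C ⊂ ℝ⁶ be the closed convex cone generated by the vector (0,0,1,0,0,0) together with all vectors (1, a²+b², a²b², a+b, ab(a+b), ab) for a, b ∈ ℝ. Then C contains every vector (x₁,...,x₆) ∈ ℝ⁶ satisfying x₂ ≥ 2|x₆| and such that the symmetric matrix [[x₁, x₄, x₆], [x₄, x₂+2x₆, x₅], [x₆, x₅, x₃]] is positive semidefinite. -/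
/-!
Let `M(x)` be the matrix `!![x 0, x 3, x 5; x 3, x 1 + 2 * x 5, x 4; x 5, x 4, x 2]`. The map
`x ↦ M(x)` is a linear bijection onto symmetric matrices sending the generator with parameters
`a, b` to `v vᵀ` for `v = (1, a + b, a b)`, and `x 1 - 2 * x 5 = M₁₁ - 4 M₀₂` is the pairing of
`M(x)` with the discriminant form `q(v) = v₁² - 4 v₀ v₂`. Hence `C` contains `v vᵀ` whenever
`q(v) ≥ 0` (by Vieta, and in the limit when `v₀ = 0`). Finally `M(x) = ∑ vₖ vₖᵀ` with
`∑ q(vₖ) ≥ 0`, and the rank-one decomposition of Sturm and Zhang rewrites such a sum as one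
with every `q(vₖ) ≥ 0`.
-/

/-- The generating set of the cone `C`: the vector `(0,0,1,0,0,0)` together with the
vectors `(1, a²+b², a²b², a+b, ab(a+b), ab)` for `a, b ∈ ℝ`. -/
def coneGens : Set (Fin 6 → ℝ) :=
  {v | v = ![0, 0, 1, 0, 0, 0] ∨
    ∃ a b : ℝ, v = ![1, a^2 + b^2, a^2 * b^2, a + b, a * b * (a + b), a * b]}

/-- The closed convex cone generated by `coneGens`: the closure of the set of finite
nonnegative linear combinations of generators. -/
def coneC : Set (Fin 6 → ℝ) :=
  closure {v | ∃ (n : ℕ) (c : Fin n → ℝ) (w : Fin n → Fin 6 → ℝ),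
    (∀ i, 0 ≤ c i) ∧ (∀ i, w i ∈ coneGens) ∧ v = ∑ i, c i • w i}

open Real Filter Topology

namespace QuadraticMap

section CommRing

variable {R E F : Type*} [CommRing R] [AddCommGroup E] [Module R E] [AddCommGroup F] [Module R F]

theorem map_smul_add_smul (Q : QuadraticMap R E F) (a b : R) (p q : E) :
    Q (a • p + b • q) = (a * a) • Q p + (b * b) • Q q + (a * b) • polar Q p q := by
  rw [QuadraticMap.map_add Q, Q.map_smul, Q.map_smul, polar_smul_left, polar_smul_right, smul_smul]

theorem map_rotate_add_map_rotate (Q : QuadraticMap R E F) {c s : R} (h : c ^ 2 + s ^ 2 = 1)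
    (p q : E) : Q (c • p + s • q) + Q (-s • p + c • q) = Q p + Q q := by
  rw [map_smul_add_smul, map_smul_add_smul]
  linear_combination (norm := module) h • Q p + h • Q q

end CommRing

section Real

variable {E F : Type*} [AddCommGroup E] [Module ℝ E] [AddCommGroup F] [Module ℝ F]

theorem exists_map_rotate_eq_zero (Q : QuadraticMap ℝ E ℝ) {p q : E} (hp : 0 ≤ Q p)
    (hq : Q q ≤ 0) : ∃ θ : ℝ, Q (cos θ • p + sin θ • q) = 0 := by
  simp_rw [map_smul_add_smul]
  have hcont : Continuous fun θ : ℝ ↦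
      (cos θ * cos θ) • Q p + (sin θ * sin θ) • Q q + (cos θ * sin θ) • polar Q p q := by
    fun_prop
  obtain ⟨θ, -, hθ⟩ := intermediate_value_Icc' pi_div_two_pos.le hcont.continuousOn
    (by simpa using And.intro hq hp)
  exact ⟨θ, hθ⟩

theorem tendsto_map_add_smul [TopologicalSpace F] [IsTopologicalAddGroup F] [ContinuousSMul ℝ F]
    (Q : QuadraticMap ℝ E F) (p q : E) :
    Tendsto (fun t : ℝ ↦ Q (p + t • q)) (𝓝 0) (𝓝 (Q p)) := by
  have h (t : ℝ) : Q (p + t • q) = Q p + (t * t) • Q q + t • polar Q p q := by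
    simpa using Q.map_smul_add_smul 1 t p q
  have hcont : Continuous fun t : ℝ ↦ Q p + (t * t) • Q q + t • polar Q p q := by fun_prop
  simpa [h] using hcont.tendsto 0

/- Sturm–Zhang rank-one decomposition: a term with `ℓ ∘ φ < 0` is rotated against one with
`ℓ ∘ φ > 0` until one of the pair has `ℓ ∘ φ = 0`; this keeps the sum and drops a term. -/
theorem sum_mem_of_nonneg {ι : Type*} (φ : QuadraticMap ℝ E F) (ℓ : F →ₗ[ℝ] ℝ)
    (K : AddSubmonoid F) (hK : ∀ v, 0 ≤ ℓ (φ v) → φ v ∈ K) (s : Finset ι) (p : ι → E)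
    (hs : 0 ≤ ℓ (∑ i ∈ s, φ (p i))) : ∑ i ∈ s, φ (p i) ∈ K := by
  classical
  induction s using Finset.strongInduction generalizing p with
  | H s ih =>
  by_cases hall : ∀ i ∈ s, 0 ≤ ℓ (φ (p i))
  · exact sum_mem fun i hi ↦ hK _ (hall i hi)
  push Not at hall
  obtain ⟨j, hj, hneg⟩ := hall
  obtain ⟨i, hi, hpos⟩ : ∃ i ∈ s, 0 < ℓ (φ (p i)) := by
    by_contra! h
    rw [map_sum] at hs
    exact (Finset.sum_neg' h ⟨j, hj, hneg⟩).not_ge hs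
  have hij : i ≠ j := by rintro rfl; linarith
  obtain ⟨θ, hθ⟩ := (ℓ.compQuadraticMap φ).exists_map_rotate_eq_zero hpos.le hneg.le
  rw [LinearMap.compQuadraticMap_apply] at hθ
  set y := cos θ • p i + sin θ • p j
  set z := -sin θ • p i + cos θ • p j
  have hsplit : ∑ k ∈ s, φ (p k) = φ y + ∑ k ∈ s.erase j, φ (Function.update p i z k) := by
    have hyz := φ.map_rotate_add_map_rotate (cos_sq_add_sin_sq θ) (p i) (p j)
    have hi' : i ∈ s.erase j := Finset.mem_erase.2 ⟨hij, hi⟩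
    have hrest : ∑ k ∈ s.erase j, φ (Function.update p i z k)
        = φ z + ∑ k ∈ (s.erase j).erase i, φ (p k) := by
      rw [← Finset.add_sum_erase _ _ hi', Function.update_self]
      congr 1
      exact Finset.sum_congr rfl fun k hk ↦ by
        rw [Function.update_of_ne (Finset.ne_of_mem_erase hk)]
    rw [hrest, ← Finset.add_sum_erase s _ hj, ← Finset.add_sum_erase _ _ hi', ← add_assoc,
      ← add_assoc, hyz, add_comm (φ (p j))]
  rw [hsplit] at hs ⊢
  refine add_mem (hK y hθ.ge) (ih _ (Finset.erase_ssubset hj) _ ?_)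
  rwa [map_add, hθ, zero_add] at hs

end Real

end QuadraticMap

theorem coneC_eq_closure_hull : coneC = (PointedCone.hull ℝ coneGens).closure := by
  rw [coneC, PointedCone.coe_closure]
  congr 1
  ext v
  rw [SetLike.mem_coe, Submodule.mem_span_set']
  constructor
  · rintro ⟨n, c, w, hc, hw, rfl⟩
    exact ⟨n, fun i ↦ ⟨c i, hc i⟩, fun i ↦ ⟨w i, hw i⟩, rfl⟩
  · rintro ⟨n, c, w, rfl⟩
    exact ⟨n, fun i ↦ c i, fun i ↦ w i, fun i ↦ (c i).2, fun i ↦ (w i).2, rfl⟩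

/-- The vector `x` whose matrix `!![x 0, x 3, x 5; x 3, x 1 + 2 * x 5, x 4; x 5, x 4, x 2]`
is `v vᵀ`. -/
def outerCoords : QuadraticMap ℝ (Fin 3 → ℝ) (Fin 6 → ℝ) :=
  .ofPolar (fun v ↦ ![v 0 ^ 2, v 1 ^ 2 - 2 * v 0 * v 2, v 2 ^ 2, v 0 * v 1, v 1 * v 2, v 0 * v 2])
    (fun a v ↦ by
      ext i
      fin_cases i <;>
        (simp only [Fin.zero_eta, Fin.mk_one, Fin.reduceFinMk, Pi.smul_apply, smul_eq_mul,
          Matrix.cons_val_zero, Matrix.cons_val_one, Matrix.cons_val]; ring))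
    (fun v v' w ↦ by
      ext i
      fin_cases i <;>
        (simp only [QuadraticMap.polar, Fin.zero_eta, Fin.mk_one, Fin.reduceFinMk, Pi.add_apply,
          Pi.sub_apply, Matrix.cons_val_zero, Matrix.cons_val_one, Matrix.cons_val]; ring))
    (fun a v w ↦ by
      ext i
      fin_cases i <;>
        (simp only [QuadraticMap.polar, Fin.zero_eta, Fin.mk_one, Fin.reduceFinMk, Pi.add_apply,
          Pi.sub_apply, Pi.smul_apply, smul_eq_mul, Matrix.cons_val_zero, Matrix.cons_val_one,
          Matrix.cons_val]; ring))

theorem outerCoords_apply (v : Fin 3 → ℝ) :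
    outerCoords v = ![v 0 ^ 2, v 1 ^ 2 - 2 * v 0 * v 2, v 2 ^ 2, v 0 * v 1, v 1 * v 2, v 0 * v 2] :=
  rfl

theorem outerCoords_vieta (a b : ℝ) :
    outerCoords ![1, a + b, a * b] = ![1, a^2 + b^2, a^2 * b^2, a + b, a * b * (a + b), a * b] := by
  ext i
  fin_cases i <;>
    (simp only [outerCoords_apply, Fin.zero_eta, Fin.mk_one, Fin.reduceFinMk,
      Matrix.cons_val_zero, Matrix.cons_val_one, Matrix.cons_val]; ring)

def discrCoord : (Fin 6 → ℝ) →ₗ[ℝ] ℝ := LinearMap.proj 1 - 2 • LinearMap.proj 5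

theorem discrCoord_apply (x : Fin 6 → ℝ) : discrCoord x = x 1 - 2 * x 5 := by
  simp [discrCoord, two_smul, two_mul]

theorem discrCoord_outerCoords (v : Fin 3 → ℝ) :
    discrCoord (outerCoords v) = discrim (v 0) (v 1) (v 2) := by
  rw [discrCoord_apply, discrim]
  simp only [outerCoords_apply, Matrix.cons_val_one, Matrix.cons_val_zero, Matrix.cons_val]
  ring

theorem exists_vieta {p s q : ℝ} (hp : p ≠ 0) (hd : 0 ≤ discrim p s q) :
    ∃ a b : ℝ, p * (a + b) = s ∧ p * (a * b) = q := by
  set d := √(discrim p s q)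
  have hd2 : d ^ 2 = s ^ 2 - 4 * p * q := sq_sqrt hd
  refine ⟨(s + d) / (2 * p), (s - d) / (2 * p), ?_, ?_⟩
  · field_simp
    ring
  · field_simp
    linear_combination -hd2

theorem outerCoords_mem_closure_hull {v : Fin 3 → ℝ} (hd : 0 ≤ discrim (v 0) (v 1) (v 2)) :
    outerCoords v ∈ (PointedCone.hull ℝ coneGens).closure := by
  set K := (PointedCone.hull ℝ coneGens).closure
  have hK (w : Fin 3 → ℝ) (h0 : w 0 ≠ 0) (hd : 0 ≤ discrim (w 0) (w 1) (w 2)) :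
      outerCoords w ∈ K := by
    obtain ⟨a, b, hs, hq⟩ := exists_vieta h0 hd
    have hw : w = w 0 • ![1, a + b, a * b] := by
      ext i; fin_cases i <;> simp [hs, hq]
    rw [hw, QuadraticMap.map_smul, outerCoords_vieta]
    exact K.smul_mem (mul_self_nonneg _)
      (subset_closure (PointedCone.subset_hull (Or.inr ⟨a, b, rfl⟩)))
  rcases ne_or_eq (v 0) 0 with h0 | h0
  · exact hK v h0 hd
  -- perturb `v 0` to a small `t * c` with `c * v 2 ≤ 0`, which keeps the discriminant nonnegative
  obtain ⟨c, hc0, hc⟩ : ∃ c : ℝ, c ≠ 0 ∧ c * v 2 ≤ 0 := by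
    rcases le_or_gt 0 (v 2) with h | h
    exacts [⟨-1, by norm_num, by linarith⟩, ⟨1, one_ne_zero, by linarith⟩]
  have hlim := (outerCoords.tendsto_map_add_smul v (Pi.single 0 c)).mono_left
    (nhdsWithin_le_nhds (s := Set.Ioi 0))
  refine isClosed_closure.mem_of_tendsto hlim
    (eventually_nhdsWithin_of_forall fun t (ht : 0 < t) ↦ hK _ ?_ ?_)
  · simp [h0, ht.ne', hc0]
  · show 0 ≤ discrim (v 0 + t * c) (v 1 + t * 0) (v 2 + t * 0)
    rw [h0, discrim]
    nlinarith [sq_nonneg (v 1), mul_nonpos_of_nonneg_of_nonpos ht.le hc]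

open Matrix in
theorem sum_outerCoords_eq {ι : Type*} [Fintype ι] {x : Fin 6 → ℝ} {B : Matrix ι (Fin 3) ℝ}
    (h : !![x 0, x 3, x 5; x 3, x 1 + 2 * x 5, x 4; x 5, x 4, x 2] = Bᵀ * B) :
    ∑ k, outerCoords (B k) = x := by
  have e := fun i j ↦ congrFun₂ h i j
  simp only [Matrix.mul_apply, Matrix.transpose_apply] at e
  ext i
  fin_cases i <;>
    simp [outerCoords_apply, Finset.sum_sub_distrib, mul_assoc, ← Finset.mul_sum, ← e, sq]

theorem semipositive_in_cone (x : Fin 6 → ℝ)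
    (h₁ : x 1 ≥ 2 * |x 5|)
    (h₂ : (!![x 0, x 3, x 5;
               x 3, x 1 + 2 * x 5, x 4;
               x 5, x 4, x 2] : Matrix (Fin 3) (Fin 3) ℝ).PosSemidef) :
    x ∈ coneC := by
  open scoped MatrixOrder in
  obtain ⟨B, hB⟩ := CStarAlgebra.nonneg_iff_eq_star_mul_self.mp h₂.nonneg
  have hx := sum_outerCoords_eq hB
  rw [coneC_eq_closure_hull, ← hx]
  refine outerCoords.sum_mem_of_nonneg discrCoord _
    (fun v hv ↦ outerCoords_mem_closure_hull ?_) _ _ ?_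
  · rwa [← discrCoord_outerCoords]
  · rw [hx, discrCoord_apply]
    linarith [le_abs_self (x 5)]
end

section
/- For fixed real t ∈ [−1,1] with t ≠ 0, t ≠ −1, the closed convex cone in ℝ⁵ generated by the vectors (1, a²(1+t²), a⁴t², a(1+t), a³t(1+t)) for a ∈ ℝ equals the set of (x₁,...,x₅) ∈ ℝ⁵ such that the 3×3 symmetric matrix [[x₁, x₄/(1+t), x₂/(1+t²)], [x₄/(1+t), x₂/(1+t²), x₅/(t(1+t))], [x₂/(1+t²), x₅/(t(1+t)), x₃/t²]] is positive semidefinite. -/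
/-!
After the diagonal change of coordinates `x ↦ μ` read off from the matrix, the generators become
the points `(1, a, a², a³, a⁴)` of the moment curve and the matrix becomes the Hankel matrix
`(μ (i + j))ᵢⱼ`, so the theorem is the truncated Hamburger moment problem in degree four.
Hankel matrices of points of the moment curve are rank-one Gram matrices, which gives one
inclusion. Conversely, if the Hankel matrix of `μ` is positive definite, the quadratic
orthogonal polynomial of `μ` has two distinct real roots `a₁, a₂`, and Gauss quadrature
`c₁ δ_{a₁} + c₂ δ_{a₂}` reproduces `μ` up to degree three with positive weights; the remaining
nonnegative mass in degree four is a limit of rescaled points `x⁻⁴ (1, x, …, x⁴)` as `x → ∞`.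
The semidefinite case follows by perturbing `μ` towards a positive definite Hankel matrix.
-/

/-- The closed convex cone `C_t ⊂ ℝ⁵` generated by the vectors
`(1, a²(1+t²), a⁴t², a(1+t), a³t(1+t))` for `a ∈ ℝ`. -/
def coneCt (t : ℝ) : Set (Fin 5 → ℝ) :=
  closure {v | ∃ (n : ℕ) (c : Fin n → ℝ) (a : Fin n → ℝ),
    (∀ i, 0 ≤ c i) ∧
    v = ∑ i, c i •
      ![1, (a i)^2 * (1 + t^2), (a i)^4 * t^2, a i * (1 + t), (a i)^3 * t * (1 + t)]}

open Set Matrix Filter Topology PointedCone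

section ConicHull

variable {ι E F : Type*} [AddCommGroup E] [Module ℝ E] [AddCommGroup F] [Module ℝ F]

theorem PointedCone.coe_hull_range_eq (v : ι → E) :
    (hull ℝ (range v) : Set E) =
      {x | ∃ (n : ℕ) (c : Fin n → ℝ) (a : Fin n → ι), (∀ i, 0 ≤ c i) ∧ x = ∑ i, c i • v (a i)} := by
  ext x
  constructor
  · intro hx
    obtain ⟨n, c, g, rfl⟩ := Submodule.mem_span_set'.mp hx
    choose a ha using fun i => (g i).2
    exact ⟨n, fun i => c i, a, fun i => (c i).2, by simp [ha]⟩
  · rintro ⟨n, c, a, hc, rfl⟩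
    exact Submodule.sum_mem _ fun i _ => smul_mem _ (hc i) (subset_hull (mem_range_self _))

theorem PointedCone.image_hull {𝓕 : Type*} [FunLike 𝓕 E F] [LinearMapClass 𝓕 ℝ E F] (f : 𝓕)
    (s : Set E) : f '' hull ℝ s = hull ℝ (f '' s) := by
  show (f : E →ₗ[ℝ] F) '' hull ℝ s = hull ℝ ((f : E →ₗ[ℝ] F) '' s)
  rw [← coe_map, PointedCone.map, Submodule.map_span]
  rfl

end ConicHull

def momentCurve {R : Type*} [Monoid R] (n : ℕ) (a : R) : Fin n → R := fun i => a ^ (i : ℕ)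

def momentCone (n : ℕ) : PointedCone ℝ (Fin n → ℝ) :=
  hull ℝ (range (momentCurve n))

theorem tendsto_inv_pow_smul_momentCurve (n : ℕ) :
    Tendsto (fun x : ℝ => (x ^ n)⁻¹ • momentCurve (n + 1) x) atTop
      (𝓝 (Pi.single (Fin.last n) 1)) := by
  rw [tendsto_pi_nhds]
  intro j
  rcases (Fin.le_last j).lt_or_eq with hj | rfl
  · have hj' : (j : ℕ) < n := hj
    rw [Pi.single_eq_of_ne hj.ne]
    refine (tendsto_inv_atTop_zero.comp (tendsto_pow_atTop (Nat.sub_ne_zero_of_lt hj'))).congr' ?_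
    filter_upwards [eventually_gt_atTop 0] with x hx
    simp [momentCurve, pow_sub₀ x hx.ne' hj'.le, mul_comm]
  · rw [Pi.single_eq_same]
    refine tendsto_const_nhds.congr' ?_
    filter_upwards [eventually_gt_atTop 0] with x hx
    simp [momentCurve, hx.ne']

theorem exists_recurrence_of_det_ne_zero {μ : Fin 5 → ℝ} (hΔ : μ 0 * μ 2 - μ 1 ^ 2 ≠ 0) :
    ∃ p q : ℝ, μ 2 = p * μ 1 + q * μ 0 ∧ μ 3 = p * μ 2 + q * μ 1 := by
  refine ⟨(μ 0 * μ 3 - μ 1 * μ 2) / (μ 0 * μ 2 - μ 1 ^ 2),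
    (μ 2 ^ 2 - μ 1 * μ 3) / (μ 0 * μ 2 - μ 1 ^ 2), ?_, ?_⟩ <;>
    rw [div_mul_eq_mul_div, div_mul_eq_mul_div, ← add_div, eq_div_iff hΔ] <;> ring

namespace Matrix

theorem isClosed_setOf_posSemidef {n : Type*} [Fintype n] :
    IsClosed {M : Matrix n n ℝ | M.PosSemidef} := by
  simp only [posSemidef_iff_dotProduct_mulVec, ofPred_and, ofPred_forall]
  refine (isClosed_eq (by fun_prop) continuous_id).inter
    (isClosed_iInter fun x => isClosed_le continuous_const ?_)
  fun_prop

def hankel {R : Type*} [CommSemiring R] (n : ℕ) :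
    (Fin (2 * n + 1) → R) →ₗ[R] Matrix (Fin (n + 1)) (Fin (n + 1)) R where
  toFun m := of fun i j => m ⟨i + j, by omega⟩
  map_add' _ _ := rfl
  map_smul' _ _ := rfl

@[simp]
theorem hankel_apply {R : Type*} [CommSemiring R] (n : ℕ) (m : Fin (2 * n + 1) → R)
    (i j : Fin (n + 1)) : hankel n m i j = m ⟨i + j, by omega⟩ :=
  rfl

theorem hankel_momentCurve {R : Type*} [CommSemiring R] (n : ℕ) (a : R) :
    hankel n (momentCurve (2 * n + 1) a) =
      vecMulVec (momentCurve (n + 1) a) (momentCurve (n + 1) a) := by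
  ext i j
  simp [momentCurve, vecMulVec_apply, pow_add]

theorem isHermitian_hankel {n : ℕ} (m : Fin (2 * n + 1) → ℝ) : (hankel n m).IsHermitian := by
  ext i j
  simp [add_comm]

theorem posSemidef_hankel_of_mem_momentCone {n : ℕ} {m : Fin (2 * n + 1) → ℝ}
    (hm : m ∈ momentCone (2 * n + 1)) : (hankel n m).PosSemidef := by
  induction hm using Submodule.span_induction with
  | mem x hx =>
    obtain ⟨a, rfl⟩ := hx
    simpa [hankel_momentCurve] using posSemidef_vecMulVec_self_star (momentCurve (n + 1) a)
  | zero => simpa using PosSemidef.zero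
  | add x y _ _ hx hy => simpa using hx.add hy
  | smul c x _ hx => simpa using hx.smul c.2

theorem hankel_two (m : Fin 5 → ℝ) :
    hankel 2 m = !![m 0, m 1, m 2; m 1, m 2, m 3; m 2, m 3, m 4] := by
  ext i j
  fin_cases i <;> fin_cases j <;> rfl

theorem star_dotProduct_hankel_two_mulVec (μ : Fin 5 → ℝ) (z : Fin 3 → ℝ) :
    star z ⬝ᵥ (hankel 2 μ *ᵥ z) = μ 0 * z 0 ^ 2 + 2 * μ 1 * (z 0 * z 1)
      + μ 2 * (z 1 ^ 2 + 2 * (z 0 * z 2)) + 2 * μ 3 * (z 1 * z 2) + μ 4 * z 2 ^ 2 := by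
  rw [hankel_two]
  simp only [Nat.reduceAdd, dotProduct, Pi.star_apply, star_trivial, mulVec, of_apply, cons_val',
    cons_val_fin_one, Fin.sum_univ_three, cons_val_zero, cons_val_one, cons_val]
  ring

theorem posDef_hankel_two_one_zero_one_zero_two :
    (hankel 2 (![1, 0, 1, 0, 2] : Fin 5 → ℝ)).PosDef := by
  refine .of_dotProduct_mulVec_pos (isHermitian_hankel _) fun z hz => ?_
  have hz' : z 0 + z 2 ≠ 0 ∨ z 1 ≠ 0 ∨ z 2 ≠ 0 := by
    contrapose! hz
    funext i
    fin_cases i <;>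
      simp only [Fin.zero_eta, Fin.mk_one, Fin.reduceFinMk, Pi.zero_apply] <;> linarith
  rw [star_dotProduct_hankel_two_mulVec]
  simp only [cons_val, mul_zero, zero_mul, one_mul, add_zero]
  have hsq : 0 < (z 0 + z 2) ^ 2 + z 1 ^ 2 + z 2 ^ 2 := by
    rcases hz' with h | h | h <;> positivity
  linarith

variable {μ : Fin 5 → ℝ}

theorem PosDef.hankel_two_zero_pos (h : (hankel 2 μ).PosDef) : 0 < μ 0 := by
  simpa using h.diag_pos (i := 0)

theorem PosDef.hankel_two_quadratic_pos (h : (hankel 2 μ).PosDef) (b : ℝ) :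
    0 < μ 0 * b ^ 2 + 2 * μ 1 * b + μ 2 := by
  have := h.dotProduct_mulVec_pos (x := ![b, 1, 0]) (by simp)
  rw [star_dotProduct_hankel_two_mulVec] at this
  simpa using this

theorem PosDef.hankel_two_det_pos (h : (hankel 2 μ).PosDef) : 0 < μ 0 * μ 2 - μ 1 ^ 2 := by
  have h₀ := h.hankel_two_zero_pos
  have key : μ 0 * μ 2 - μ 1 ^ 2 =
      μ 0 * (μ 0 * (-μ 1 / μ 0) ^ 2 + 2 * μ 1 * (-μ 1 / μ 0) + μ 2) := by
    field_simp
    ring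
  rw [key]
  exact mul_pos h₀ (h.hankel_two_quadratic_pos _)

/-- `a₁, a₂` are the roots of the quadratic orthogonal polynomial of `μ`. -/
theorem PosDef.exists_hankel_two_nodes (h : (hankel 2 μ).PosDef) : ∃ a₁ a₂ : ℝ, a₁ ≠ a₂ ∧
    μ 2 = (a₁ + a₂) * μ 1 - a₁ * a₂ * μ 0 ∧ μ 3 = (a₁ + a₂) * μ 2 - a₁ * a₂ * μ 1 := by
  obtain ⟨p, q, h₂, h₃⟩ := exists_recurrence_of_det_ne_zero h.hankel_two_det_pos.ne'
  have hdisc : 0 < p ^ 2 + 4 * q := by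
    have := h.hankel_two_quadratic_pos (-p / 2)
    nlinarith [h.hankel_two_zero_pos]
  set s := √(p ^ 2 + 4 * q)
  have hs : 0 < s := Real.sqrt_pos.mpr hdisc
  have hs2 : s ^ 2 = p ^ 2 + 4 * q := Real.sq_sqrt hdisc.le
  refine ⟨(p + s) / 2, (p - s) / 2, by linarith, ?_, ?_⟩
  · linear_combination h₂ - μ 0 / 4 * hs2
  · linear_combination h₃ - μ 1 / 4 * hs2

theorem PosDef.exists_eq_two_atoms_add (h : (hankel 2 μ).PosDef) :
    ∃ c₁ c₂ a₁ a₂ r : ℝ, 0 ≤ c₁ ∧ 0 ≤ c₂ ∧ 0 ≤ r ∧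
      μ = c₁ • momentCurve 5 a₁ + c₂ • momentCurve 5 a₂ + r • Pi.single 4 1 := by
  obtain ⟨a₁, a₂, hne, h₂, h₃⟩ := h.exists_hankel_two_nodes
  have hs : a₁ - a₂ ≠ 0 := sub_ne_zero.mpr hne
  obtain ⟨c₁, hc₁⟩ : ∃ c, c * (a₁ - a₂) = μ 1 - a₂ * μ 0 := ⟨_, div_mul_cancel₀ _ hs⟩
  obtain ⟨c₂, hc₂⟩ : ∃ c, c * (a₁ - a₂) = a₁ * μ 0 - μ 1 := ⟨_, div_mul_cancel₀ _ hs⟩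
  have e₀ : c₁ + c₂ = μ 0 := mul_right_cancel₀ hs (by linear_combination hc₁ + hc₂)
  have e₁ : c₁ * a₁ + c₂ * a₂ = μ 1 :=
    mul_right_cancel₀ hs (by linear_combination a₁ * hc₁ + a₂ * hc₂)
  have e₂ : c₁ * a₁ ^ 2 + c₂ * a₂ ^ 2 = μ 2 := by
    linear_combination (a₁ + a₂) * e₁ - a₁ * a₂ * e₀ - h₂
  have e₃ : c₁ * a₁ ^ 3 + c₂ * a₂ ^ 3 = μ 3 := by
    linear_combination (a₁ + a₂) * e₂ - a₁ * a₂ * e₁ - h₃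
  obtain ⟨r, e₄⟩ : ∃ r, c₁ * a₁ ^ 4 + c₂ * a₂ ^ 4 + r = μ 4 := ⟨_, add_sub_cancel _ _⟩
  -- The quadratic form evaluated at `x - b` sees `μ` only up to degree two, where it agrees
  -- with `c₁ δ_{a₁} + c₂ δ_{a₂}`; at `b = a₂` only the weight `c₁` survives.
  have weight_nonneg : ∀ c b, μ 0 * b ^ 2 + 2 * μ 1 * b + μ 2 = c * (a₁ - a₂) ^ 2 → 0 ≤ c :=
    fun c b hc => ((pos_iff_pos_of_mul_pos (hc ▸ h.hankel_two_quadratic_pos b)).mpr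
      (by positivity)).le
  refine ⟨c₁, c₂, a₁, a₂, r, ?_, ?_, ?_, ?_⟩
  · exact weight_nonneg c₁ (-a₂) (by linear_combination -(a₂ ^ 2 * e₀ - 2 * a₂ * e₁ + e₂))
  · exact weight_nonneg c₂ (-a₁) (by linear_combination -(a₁ ^ 2 * e₀ - 2 * a₁ * e₁ + e₂))
  · -- evaluate the form at the orthogonal polynomial `(x - a₁)(x - a₂)`, which kills both atoms
    have := h.posSemidef.dotProduct_mulVec_nonneg ![a₁ * a₂, -(a₁ + a₂), 1]
    rw [star_dotProduct_hankel_two_mulVec] at this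
    simp only [cons_val_zero, cons_val_one, cons_val, one_pow, mul_one] at this
    linear_combination this - ((a₁ * a₂) ^ 2 * e₀ - 2 * a₁ * a₂ * (a₁ + a₂) * e₁
      + ((a₁ + a₂) ^ 2 + 2 * a₁ * a₂) * e₂ - 2 * (a₁ + a₂) * e₃ + e₄)
  · funext j
    fin_cases j <;> simp [momentCurve] <;> linarith

theorem PosDef.mem_closure_momentCone (h : (hankel 2 μ).PosDef) : μ ∈ (momentCone 5).closure := by
  obtain ⟨c₁, c₂, a₁, a₂, r, hc₁, hc₂, hr, rfl⟩ := h.exists_eq_two_atoms_add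
  set K := (momentCone 5).closure
  have hcurve : ∀ a, momentCurve 5 a ∈ K :=
    fun a => subset_closure (subset_hull (mem_range_self a))
  have hsingle : Pi.single 4 1 ∈ K :=
    mem_closure_of_tendsto (tendsto_inv_pow_smul_momentCurve 4)
      (.of_forall fun x => (momentCone 5).smul_mem (by positivity) (subset_hull (mem_range_self x)))
  exact K.add_mem (K.add_mem (K.smul_mem hc₁ (hcurve a₁)) (K.smul_mem hc₂ (hcurve a₂)))
    (K.smul_mem hr hsingle)

theorem PosSemidef.mem_closure_momentCone (h : (hankel 2 μ).PosSemidef) :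
    μ ∈ (momentCone 5).closure := by
  set ν : Fin 5 → ℝ := ![1, 0, 1, 0, 2]
  have hmem : ∀ ε : ℝ, 0 < ε → μ + ε • ν ∈ (momentCone 5).closure := fun ε hε =>
    PosDef.mem_closure_momentCone <| by
      rw [map_add, map_smul]
      exact (posDef_hankel_two_one_zero_one_zero_two.smul hε).posSemidef_add h
  have hlim : Tendsto (fun ε : ℝ => μ + ε • ν) (𝓝[>] 0) (𝓝 μ) := by
    have hcont : Continuous fun ε : ℝ => μ + ε • ν := by fun_prop
    simpa using (hcont.tendsto 0).mono_left nhdsWithin_le_nhds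
  exact isClosed_closure.mem_of_tendsto hlim (eventually_nhdsWithin_of_forall fun ε hε => hmem ε hε)

end Matrix

theorem coe_closure_momentCone_five :
    ((momentCone 5).closure : Set (Fin 5 → ℝ)) = {μ | (hankel 2 μ).PosSemidef} :=
  (closure_minimal (fun _ hm => posSemidef_hankel_of_mem_momentCone hm)
      (isClosed_setOf_posSemidef.preimage (hankel 2).continuous_of_finiteDimensional)).antisymm
    fun _ => PosSemidef.mem_closure_momentCone

noncomputable def coneCtScaling (t : ℝ) (ht0 : t ≠ 0) (ht1 : 1 + t ≠ 0) :
    (Fin 5 → ℝ) ≃L[ℝ] (Fin 5 → ℝ) :=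
  LinearEquiv.toContinuousLinearEquiv
    { toFun := fun m => ![m 0, m 2 * (1 + t ^ 2), m 4 * t ^ 2, m 1 * (1 + t), m 3 * t * (1 + t)]
      invFun := fun x => ![x 0, x 3 / (1 + t), x 1 / (1 + t ^ 2), x 4 / (t * (1 + t)), x 2 / t ^ 2]
      map_add' := fun m m' => by ext j; fin_cases j <;> simp [add_mul]
      map_smul' := fun c m => by ext j; fin_cases j <;> simp [mul_assoc]
      left_inv := fun m => by
        have : 1 + t ^ 2 ≠ 0 := by positivity
        ext j; fin_cases j <;> simp [*, mul_assoc]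
      right_inv := fun x => by
        have : 1 + t ^ 2 ≠ 0 := by positivity
        ext j; fin_cases j <;> simp [*, mul_assoc] }

theorem coneCtScaling_momentCurve (t : ℝ) (ht0 : t ≠ 0) (ht1 : 1 + t ≠ 0) (a : ℝ) :
    coneCtScaling t ht0 ht1 (momentCurve 5 a) =
      ![1, a ^ 2 * (1 + t ^ 2), a ^ 4 * t ^ 2, a * (1 + t), a ^ 3 * t * (1 + t)] := by
  funext j
  fin_cases j <;> simp [coneCtScaling, momentCurve]

theorem coneCt_eq_posSemidef_general (t : ℝ) (ht0 : t ≠ 0) (ht1 : t ≠ -1) :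
    coneCt t = {x : Fin 5 → ℝ |
      (!![x 0, x 3 / (1 + t), x 1 / (1 + t^2);
          x 3 / (1 + t), x 1 / (1 + t^2), x 4 / (t * (1 + t));
          x 1 / (1 + t^2), x 4 / (t * (1 + t)), x 2 / t^2] :
        Matrix (Fin 3) (Fin 3) ℝ).PosSemidef} := by
  have ht1' : 1 + t ≠ 0 := by contrapose! ht1; linarith
  set e := coneCtScaling t ht0 ht1'
  calc coneCt t = closure (hull ℝ (range (e ∘ momentCurve 5))) := by
        rw [coe_hull_range_eq]
        simp only [Function.comp_apply, e, coneCtScaling_momentCurve]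
        rfl
    _ = e '' (momentCone 5).closure := by
        rw [range_comp, ← image_hull, momentCone, coe_closure]
        exact (e.toHomeomorph.image_closure _).symm
    _ = _ := by
        rw [coe_closure_momentCone_five, e.image_eq_preimage_symm]
        ext x
        simp only [mem_preimage, mem_ofPred_eq, hankel_two]
        rfl

theorem coneCt_eq_posSemidef (t : ℝ) (ht : |t| ≤ 1) (ht0 : t ≠ 0) (ht1 : t ≠ -1) :
    coneCt t = {x : Fin 5 → ℝ |
      (!![x 0, x 3 / (1 + t), x 1 / (1 + t^2);
          x 3 / (1 + t), x 1 / (1 + t^2), x 4 / (t * (1 + t));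
          x 1 / (1 + t^2), x 4 / (t * (1 + t)), x 2 / t^2] :
        Matrix (Fin 3) (Fin 3) ℝ).PosSemidef} :=
  coneCt_eq_posSemidef_general t ht0 ht1
end
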